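/- The 4×4 matrix b = (1/144)·[[11,8,5,12],[8,8,8,12],[5,8,11,12],[12,12,12,24]] is positive semidefinite. -/

import Mathlib

/-! Completing the squares, the quadratic form of `144 • b` is
`3 (x₀ - x₂)² + 2 (2x₀ + 2x₁ + 2x₂ + 3x₃)² + 6 x₃²`, i.e. `144 • b = Lᴴ D L` with `D ≥ 0` diagonal,
and congruences and nonnegative scalings preserve positive semidefiniteness. -/

open Matrix

def lieTaylorFactor : Matrix (Fin 3) (Fin 4) ℝ := !![1, 0, -1, 0; 2, 2, 2, 3; 0, 0, 0, 1]

def lieTaylorWeights : Fin 3 → ℝ := ![3, 2, 6]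

lemma lieTaylorWeights_nonneg : 0 ≤ lieTaylorWeights := fun i => by
  fin_cases i <;> norm_num [lieTaylorWeights]

lemma eq_lieTaylorFactor_conjTranspose_mul_diagonal_mul :
    (!![11, 8, 5, 12; 8, 8, 8, 12; 5, 8, 11, 12; 12, 12, 12, 24] : Matrix (Fin 4) (Fin 4) ℝ) =
      lieTaylorFactorᴴ * diagonal lieTaylorWeights * lieTaylorFactor := by
  ext i j
  fin_cases i <;> fin_cases j <;>
    simp [lieTaylorFactor, lieTaylorWeights, mul_apply, Fin.sum_univ_succ] <;> norm_num

theorem stmt_2 :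
    ((1/144 : ℝ) •
      !![11, 8, 5, 12; 8, 8, 8, 12; 5, 8, 11, 12; 12, 12, 12, 24] :
      Matrix (Fin 4) (Fin 4) ℝ).PosSemidef := by
  rw [eq_lieTaylorFactor_conjTranspose_mul_diagonal_mul]
  exact ((PosSemidef.diagonal lieTaylorWeights_nonneg).conjTranspose_mul_mul_same _).smul
    (by norm_num)
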